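/- arXiv:1208.2691 — 2 statements merged into one kernel-verified Lean document; each statement's English description precedes it below -/
import Mathlib

section
/- For positive integers r < s, the confluent hypergeometric function satisfies ₁F₁(r; s; z) = (s−2)!(1−s)_r/(r−1)! · z^(1−s) · [ Σ_{k=0}^{s−r−1} z^k (−s+r+1)_k/(k!(2−s)_k) − e^z Σ_{k=0}^{r−1} (−z)^k (1−r)_k/(k!(2−s)_k) ], where (x)_k denotes the Pochhammer symbol (rising factorial). -/
open MeasureTheory ProbabilityTheory Real

/-- Heaviside step function. -/
noncomputable def heaviside (x : ℝ) : ℝ := if 0 ≤ x then 1 else 0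

/-- Kummer's confluent hypergeometric function ₁F₁(a; b; z). -/
noncomputable def hyp1F1 (a b z : ℝ) : ℝ :=
  ∑' n : ℕ, ((ascPochhammer ℝ n).eval a / ((ascPochhammer ℝ n).eval b * n.factorial)) * z ^ n

/-- The modified Bessel function of the first kind of order `ν`. -/
noncomputable def besselI (ν : ℝ) (x : ℝ) : ℝ :=
  ∑' m : ℕ, (x / 2) ^ (2 * (m : ℝ) + ν) / (m.factorial * Real.Gamma (m + ν + 1))

/-!
Write `a = r - 1`, `N = s - 1` and `p(m) = (m - s + 2)_a`. Comparing coefficients gives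
`z^N ₁F₁(r; s; z) = N!/a! · Σ_{m ≥ N} p(m) z^m/m!`. Since `p` vanishes at
`m = s - r, …, s - 2`, the terms `m < N` missing from the full series reduce to the
terminating sum over `m < s - r`, while expanding `p(m)` in the falling factorials of `m`
(a Chu–Vandermonde identity) gives `Σ_m p(m) z^m/m! = e^z Σ_j C(a,j) (j - s + 2)_{a-j} z^j`.
Everything else is the rule `(x)_m (x + m)_n = (x)_{m+n}` for Pochhammer symbols.
-/

open Finset Polynomial

section Pochhammer

variable {R : Type*}

theorem ascPochhammer_eval_mul_eval_add [CommSemiring R] (x : R) (m n : ℕ) :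
    (ascPochhammer R m).eval x * (ascPochhammer R n).eval (x + m) =
      (ascPochhammer R (m + n)).eval x := by
  rw [← ascPochhammer_mul, eval_mul, eval_comp, eval_add, eval_X, eval_natCast]

theorem ascPochhammer_eval_mul_eval_add_comm [CommSemiring R] (x : R) (m n : ℕ) :
    (ascPochhammer R m).eval x * (ascPochhammer R n).eval (x + m) =
      (ascPochhammer R n).eval x * (ascPochhammer R m).eval (x + n) := by
  rw [ascPochhammer_eval_mul_eval_add, ascPochhammer_eval_mul_eval_add, add_comm]

theorem descPochhammer_int_smeval [CommRing R] (x : R) (n : ℕ) :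
    (descPochhammer ℤ n).smeval x = (descPochhammer R n).eval x := by
  rw [← aeval_eq_smeval, ← eval_map_algebraMap, descPochhammer_map]

theorem ascPochhammer_eval_add_eq_sum [CommRing R] (x y : R) (n : ℕ) :
    (ascPochhammer R n).eval (x + y) = ∑ ij ∈ antidiagonal n,
      n.choose ij.1 *
        ((descPochhammer R ij.1).eval x * (ascPochhammer R ij.2).eval (y + ij.1)) := by
  have h := Ring.descPochhammer_smeval_add (r := x) (s := y + n - 1) n (Commute.all _ _)
  simp only [descPochhammer_int_smeval] at h
  rw [show x + y = x + (y + n - 1) - n + 1 by ring, ← descPochhammer_eval_eq_ascPochhammer, h]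
  refine sum_congr rfl fun ij hij => ?_
  rw [descPochhammer_eval_eq_ascPochhammer (r := y + n - 1)]
  congr 3
  rw [← HasAntidiagonal.mem_antidiagonal.mp hij]
  push_cast
  ring

theorem ascPochhammer_eval_neg_natCast_ne_zero [CommRing R] [IsDomain R] [CharZero R]
    {n k : ℕ} (h : k ≤ n) : (ascPochhammer R k).eval (-(n : R)) ≠ 0 := by
  rw [Ne, ascPochhammer_eval_eq_zero_iff]
  rintro ⟨i, hi, hin⟩
  rw [neg_neg, Nat.cast_inj] at hin
  omega

theorem factorial_mul_ascPochhammer_eval_neg_succ [CommRing R] (n a : ℕ) :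
    n.factorial * (ascPochhammer R (a + 1)).eval (-(n + 1 : R)) =
      -((n + 1).factorial * (ascPochhammer R a).eval (-(n : R))) := by
  have h := ascPochhammer_eval_mul_eval_add (-(n + 1 : R)) 1 a
  rw [ascPochhammer_one, eval_X, add_comm 1 a, Nat.cast_one,
    show -(n + 1 : R) + 1 = -n by ring] at h
  rw [← h, Nat.factorial_succ]
  push_cast
  ring

theorem ascPochhammer_eval_succ_eq_div [Field R] [CharZero R] (m n : ℕ) :
    (ascPochhammer R n).eval (m + 1 : R) = (m + n).factorial / m.factorial := by
  rw [← factorial_mul_ascPochhammer R m n,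
    mul_div_cancel_left₀ _ (Nat.cast_ne_zero.mpr m.factorial_ne_zero)]

end Pochhammer

theorem hasSum_descFactorial_mul_pow_div_factorial (j : ℕ) (z : ℝ) :
    HasSum (fun m : ℕ => (m.descFactorial j : ℝ) * z ^ m / m.factorial)
      (z ^ j * Real.exp z) := by
  rw [← hasSum_nat_add_iff' j, sum_eq_zero fun m hm => by
    rw [Nat.descFactorial_eq_zero_iff_lt.mpr (mem_range.mp hm)]; simp, sub_zero]
  have hexp := (NormedSpace.expSeries_div_hasSum_exp z).mul_left (z ^ j)
  rw [← Real.exp_eq_exp_ℝ] at hexp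
  refine hexp.congr_fun fun n => ?_
  have h := Nat.factorial_mul_descFactorial (Nat.le_add_left j n)
  rw [Nat.add_sub_cancel] at h
  rw [← h, pow_add]
  push_cast
  field_simp

theorem hasSum_ascPochhammer_eval_mul_pow_div_factorial (n : ℕ) (y z : ℝ) :
    HasSum (fun m : ℕ => (ascPochhammer ℝ n).eval (m + y) * z ^ m / m.factorial)
      ((∑ ij ∈ antidiagonal n,
        n.choose ij.1 * (ascPochhammer ℝ ij.2).eval (y + ij.1) * z ^ ij.1) * Real.exp z) := by
  have h := hasSum_sum fun (ij : ℕ × ℕ) (_ : ij ∈ antidiagonal n) =>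
    (hasSum_descFactorial_mul_pow_div_factorial ij.1 z).mul_left
      (n.choose ij.1 * (ascPochhammer ℝ ij.2).eval (y + ij.1))
  rw [sum_mul, sum_congr rfl fun ij _ => mul_assoc _ _ _]
  refine h.congr_fun fun m => ?_
  rw [ascPochhammer_eval_add_eq_sum, sum_mul, sum_div]
  refine sum_congr rfl fun ij _ => ?_
  rw [descPochhammer_eval_eq_descFactorial]
  ring

theorem pow_mul_hyp1F1_natCast_succ (a N : ℕ) (z : ℝ) :
    z ^ N * hyp1F1 (a + 1 : ℕ) (N + 1 : ℕ) z = N.factorial / a.factorial *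
      ∑' n : ℕ, (ascPochhammer ℝ a).eval (n + 1 : ℝ) * z ^ (n + N) / (n + N).factorial := by
  rw [hyp1F1, ← tsum_mul_left, ← tsum_mul_left]
  refine tsum_congr fun n => ?_
  push_cast
  simp only [ascPochhammer_eval_succ_eq_div]
  rw [pow_add, add_comm a n, add_comm N n]
  field_simp

theorem pow_mul_hyp1F1_natCast (a t : ℕ) (z : ℝ) :
    z ^ (a + t + 1) * hyp1F1 (a + 1 : ℕ) (a + t + 2 : ℕ) z =
      (a + t + 1).factorial / a.factorial *
        ((∑ ij ∈ antidiagonal a, a.choose ij.1 *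
            (ascPochhammer ℝ ij.2).eval (ij.1 - (a + t : ℝ)) * z ^ ij.1) * Real.exp z -
          ∑ m ∈ range (t + 1),
            (ascPochhammer ℝ a).eval (m - (a + t : ℝ)) * z ^ m / m.factorial) := by
  set p : ℕ → ℝ := fun m =>
    (ascPochhammer ℝ a).eval (m - (a + t : ℝ)) * z ^ m / m.factorial
  have hp : HasSum p ((∑ ij ∈ antidiagonal a, a.choose ij.1 *
      (ascPochhammer ℝ ij.2).eval (ij.1 - (a + t : ℝ)) * z ^ ij.1) * Real.exp z) := by
    simpa only [neg_add_eq_sub, ← sub_eq_add_neg] using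
      hasSum_ascPochhammer_eval_mul_pow_div_factorial a (-(a + t)) z
  have hvanish : ∀ k < a, p (t + 1 + k) = 0 := fun k hk => by
    obtain ⟨j, rfl⟩ : ∃ j, a = k + 1 + j := ⟨a - (k + 1), by omega⟩
    have : ((t + 1 + k : ℕ) : ℝ) - (k + 1 + j + t : ℕ) = -(j : ℝ) := by push_cast; ring
    simp only [p]
    push_cast at this ⊢
    rw [this, ascPochhammer_eval_neg_coe_nat_of_lt (by omega), zero_mul, zero_div]
  have hsplit : ∑ m ∈ range (a + t + 1), p m = ∑ m ∈ range (t + 1), p m := by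
    rw [show a + t + 1 = t + 1 + a by ring, sum_range_add,
      sum_eq_zero fun k hk => hvanish k (mem_range.mp hk), add_zero]
  rw [← hasSum_nat_add_iff' (a + t + 1), hsplit] at hp
  rw [← hp.tsum_eq, pow_mul_hyp1F1_natCast_succ a (a + t + 1)]
  congr 2 with n
  simp only [p]
  push_cast
  ring_nf

theorem sum_range_ascPochhammer_ratio_mul (a t : ℕ) (z : ℝ) :
    (∑ k ∈ range (t + 1), z ^ k * (ascPochhammer ℝ k).eval (-t : ℝ) /
        (k.factorial * (ascPochhammer ℝ k).eval (-(a + t : ℝ)))) *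
        (ascPochhammer ℝ a).eval (-(a + t : ℝ)) =
      ∑ m ∈ range (t + 1),
        (ascPochhammer ℝ a).eval (m - (a + t : ℝ)) * z ^ m / m.factorial := by
  rw [sum_mul]
  refine sum_congr rfl fun k hk => ?_
  have h := ascPochhammer_eval_mul_eval_add_comm (-(a + t : ℝ)) k a
  rw [show -(a + t : ℝ) + k = k - (a + t) by ring, show -(a + t : ℝ) + a = -t by ring] at h
  have : (ascPochhammer ℝ k).eval (-(a + t : ℝ)) ≠ 0 := by
    simpa using ascPochhammer_eval_neg_natCast_ne_zero (R := ℝ) (n := a + t) (k := k)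
      (by simp at hk; omega)
  field_simp
  linear_combination -z ^ k * h

theorem sum_range_neg_pow_ascPochhammer_ratio_mul (a t : ℕ) (z : ℝ) :
    (∑ k ∈ range (a + 1), (-z) ^ k * (ascPochhammer ℝ k).eval (-a : ℝ) /
        (k.factorial * (ascPochhammer ℝ k).eval (-(a + t : ℝ)))) *
        (ascPochhammer ℝ a).eval (-(a + t : ℝ)) =
      ∑ ij ∈ antidiagonal a, a.choose ij.1 *
        (ascPochhammer ℝ ij.2).eval (ij.1 - (a + t : ℝ)) * z ^ ij.1 := by
  rw [sum_mul, Nat.sum_antidiagonal_eq_sum_range_succ_mk]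
  refine sum_congr rfl fun k hk => ?_
  have hka : k ≤ a := Nat.lt_succ_iff.mp (mem_range.mp hk)
  have h := ascPochhammer_eval_mul_eval_add (-(a + t : ℝ)) k (a - k)
  rw [show -(a + t : ℝ) + k = k - (a + t) by ring, Nat.add_sub_cancel' hka] at h
  have : (ascPochhammer ℝ k).eval (-(a + t : ℝ)) ≠ 0 := by
    simpa using ascPochhammer_eval_neg_natCast_ne_zero (R := ℝ) (n := a + t) (k := k) (by omega)
  have hsign : (-z) ^ k * (-1) ^ k = z ^ k := by rw [← mul_pow]; simp
  rw [ascPochhammer_eval_neg_eq_descPochhammer, descPochhammer_eval_eq_descFactorial,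
    Nat.descFactorial_eq_factorial_mul_choose, ← mul_assoc, hsign]
  field_simp
  push_cast
  linear_combination -z ^ k * (k.factorial : ℝ) * (a.choose k : ℝ) * h

/-- For positive integers `r < s` and `z ≠ 0`,
`₁F₁(r; s; z) = (s−2)!(1−s)_r/(r−1)! z^(1−s)
  [ Σ_{k=0}^{s−r−1} z^k (−s+r+1)_k/(k!(2−s)_k) − e^z Σ_{k=0}^{r−1} (−z)^k (1−r)_k/(k!(2−s)_k) ]`. -/
theorem hyp1F1_int_params (r s : ℕ) (hr : 0 < r) (hrs : r < s) (z : ℝ) (hz : z ≠ 0) :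
    hyp1F1 r s z =
      ((s - 2).factorial * (ascPochhammer ℝ r).eval (1 - (s : ℝ)) / (r - 1).factorial) *
        z ^ (1 - (s : ℤ)) *
        ((∑ k ∈ Finset.range (s - r), z ^ k *
            (ascPochhammer ℝ k).eval (-(s : ℝ) + r + 1) /
              (k.factorial * (ascPochhammer ℝ k).eval (2 - (s : ℝ)))) -
          Real.exp z * ∑ k ∈ Finset.range r, (-z) ^ k *
            (ascPochhammer ℝ k).eval (1 - (r : ℝ)) /
              (k.factorial * (ascPochhammer ℝ k).eval (2 - (s : ℝ)))) := by
  obtain ⟨a, rfl⟩ : ∃ a, r = a + 1 := ⟨r - 1, by omega⟩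
  obtain ⟨t, rfl⟩ : ∃ t, s = a + t + 2 := ⟨s - a - 2, by omega⟩
  have key := pow_mul_hyp1F1_natCast a t z
  rw [← sum_range_ascPochhammer_ratio_mul, ← sum_range_neg_pow_ascPochhammer_ratio_mul] at key
  have hC := factorial_mul_ascPochhammer_eval_neg_succ (R := ℝ) (a + t) a
  rw [show a + t + 2 - (a + 1) = t + 1 by omega, show a + t + 2 - 2 = a + t by omega,
    Nat.add_sub_cancel,
    show (1 : ℤ) - (a + t + 2 : ℕ) = -((a + t + 1 : ℕ) : ℤ) by push_cast; ring,
    zpow_neg, zpow_natCast]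
  push_cast at key hC ⊢
  rw [show -((a : ℝ) + t + 2) + (a + 1) + 1 = -t by ring,
    show (2 : ℝ) - (a + t + 2) = -(a + t) by ring,
    show (1 : ℝ) - (a + 1) = -a by ring, show (1 : ℝ) - (a + t + 2) = -(a + t + 1) by ring, hC,
    (eq_inv_mul_iff_mul_eq₀ (pow_ne_zero _ hz)).mpr key]
  ring
end

section
/- Let P_N be the set of functions x ↦ e^(bx) x^n with b real and n a nonnegative integer with n < N, and let *̃ be the modified finite convolution which equals the finite convolution ∫₀^x f(t)g(x−t)dt when the exponential rates differ and is defined to be 0 when they coincide. Then the real linear span of P_N, equipped with *̃, is closed under *̃ (i.e., forms an algebra over ℝ) for every N. -/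
/-!
Integrating by parts against `t ↦ e^((a-b)t)` expresses `(a - b)` times the convolution of
`e^(ax)xⁿ` and `e^(bx)xᵐ` through the two boundary terms, which lie in `P_N`, and the
convolutions with `(n-1, m)` and `(n, m-1)`; induction on `n + m` concludes when `a ≠ b`.
-/

open MeasureTheory Real

/-- The set `P_N` of functions `x ↦ e^(bx) xⁿ` with `b ∈ ℝ` and `n < N`. -/
def expMonomials (N : ℕ) : Set (ℝ → ℝ) :=
  {f | ∃ (b : ℝ) (n : ℕ), n < N ∧ f = fun x => Real.exp (b * x) * x ^ n}

/-- The modified finite convolution of `e^(ax)xⁿ` and `e^(bx)xᵐ`: the finite convolution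
`∫₀^x f(t)g(x−t)dt` when `a ≠ b`, and `0` when `a = b`. -/
noncomputable def modConv (a : ℝ) (n : ℕ) (b : ℝ) (m : ℕ) : ℝ → ℝ :=
  if a = b then 0
  else fun x => ∫ t in (0:ℝ)..x,
    (Real.exp (a * t) * t ^ n) * (Real.exp (b * (x - t)) * (x - t) ^ m)

theorem hasDerivAt_pow_mul_sub_pow (x t : ℝ) (n m : ℕ) :
    HasDerivAt (fun s : ℝ => s ^ n * (x - s) ^ m)
      (n * t ^ (n - 1) * (x - t) ^ m - m * t ^ n * (x - t) ^ (m - 1)) t := by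
  have hsub : HasDerivAt (fun s : ℝ => (x - s) ^ m) (-(m * (x - t) ^ (m - 1))) t := by
    simpa [Function.comp_def] using
      (hasDerivAt_pow m (x - t)).comp t ((hasDerivAt_id t).const_sub x)
  exact ((hasDerivAt_pow n t).mul hsub).congr_deriv (by ring)

theorem mul_integral_exp_mul_pow_mul_sub_pow (c x : ℝ) (n m : ℕ) :
    c * ∫ t in (0:ℝ)..x, exp (c * t) * t ^ n * (x - t) ^ m =
      exp (c * x) * x ^ n * 0 ^ m - 0 ^ n * x ^ m
        - n * (∫ t in (0:ℝ)..x, exp (c * t) * t ^ (n - 1) * (x - t) ^ m)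
        + m * ∫ t in (0:ℝ)..x, exp (c * t) * t ^ n * (x - t) ^ (m - 1) := by
  have hexp (t : ℝ) : HasDerivAt (fun s => exp (c * s)) (exp (c * t) * c) t := by
    simpa using ((hasDerivAt_id t).const_mul c).exp
  have parts := intervalIntegral.integral_deriv_mul_eq_sub (a := 0) (b := x)
    (fun t _ => hasDerivAt_pow_mul_sub_pow x t n m) (fun t _ => hexp t)
    (by apply Continuous.intervalIntegrable; fun_prop)
    (by apply Continuous.intervalIntegrable; fun_prop)
  have expand : ∫ t in (0:ℝ)..x,
      (n * t ^ (n - 1) * (x - t) ^ m - m * t ^ n * (x - t) ^ (m - 1)) * exp (c * t)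
        + t ^ n * (x - t) ^ m * (exp (c * t) * c) =
      c * (∫ t in (0:ℝ)..x, exp (c * t) * t ^ n * (x - t) ^ m)
        + n * (∫ t in (0:ℝ)..x, exp (c * t) * t ^ (n - 1) * (x - t) ^ m)
        - m * ∫ t in (0:ℝ)..x, exp (c * t) * t ^ n * (x - t) ^ (m - 1) := by
    rw [← intervalIntegral.integral_const_mul, ← intervalIntegral.integral_const_mul,
      ← intervalIntegral.integral_const_mul, ← intervalIntegral.integral_add,
      ← intervalIntegral.integral_sub]
    · congr 1; ext t; ring
    all_goals apply Continuous.intervalIntegrable; fun_prop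
  simp only [sub_self, sub_zero, mul_zero, exp_zero, mul_one] at parts
  linarith

noncomputable def expMonomial (b : ℝ) (n : ℕ) : ℝ → ℝ := fun x => exp (b * x) * x ^ n

theorem expMonomial_mem_span {N n : ℕ} (b : ℝ) (hn : n < N) :
    expMonomial b n ∈ Submodule.span ℝ (expMonomials N) :=
  Submodule.subset_span ⟨b, n, hn, rfl⟩

theorem modConv_of_ne {a b : ℝ} (hab : a ≠ b) (n m : ℕ) :
    modConv a n b m =
      fun x => exp (b * x) * ∫ t in (0:ℝ)..x, exp ((a - b) * t) * t ^ n * (x - t) ^ m := by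
  funext x
  rw [modConv, if_neg hab, ← intervalIntegral.integral_const_mul]
  congr 1; ext t
  have hexp : exp (a * t) * exp (b * (x - t)) = exp (b * x) * exp ((a - b) * t) := by
    rw [← exp_add, ← exp_add]; ring_nf
  linear_combination t ^ n * (x - t) ^ m * hexp

/-- `0 ^ m` is the boundary term at `t = x`, present only for `m = 0`; the truncated `n - 1`
only occurs with coefficient `n`. -/
theorem sub_smul_modConv {a b : ℝ} (hab : a ≠ b) (n m : ℕ) :
    (a - b) • modConv a n b m =
      (0:ℝ) ^ m • expMonomial a n - (0:ℝ) ^ n • expMonomial b m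
        - (n:ℝ) • modConv a (n - 1) b m + (m:ℝ) • modConv a n b (m - 1) := by
  funext x
  simp only [modConv_of_ne hab, expMonomial, Pi.add_apply, Pi.sub_apply, Pi.smul_apply,
    smul_eq_mul]
  have hexp : exp (b * x) * exp ((a - b) * x) = exp (a * x) := by
    rw [← exp_add]; ring_nf
  linear_combination exp (b * x) * mul_integral_exp_mul_pow_mul_sub_pow (a - b) x n m
    + x ^ n * (0:ℝ) ^ m * hexp

theorem modConv_mem_span_expMonomials {N n m : ℕ} {a b : ℝ} (hab : a ≠ b) (hn : n < N)
    (hm : m < N) : modConv a n b m ∈ Submodule.span ℝ (expMonomials N) := by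
  induction h : n + m using Nat.strong_induction_on generalizing n m with
  | _ k ih =>
  subst h
  rw [← Submodule.smul_mem_iff _ (sub_ne_zero.2 hab), sub_smul_modConv hab]
  have lower_n : (n:ℝ) • modConv a (n - 1) b m ∈ Submodule.span ℝ (expMonomials N) := by
    rcases n with _ | n
    · simp
    · exact Submodule.smul_mem _ _ (ih (n + m) (by omega) (by omega) hm rfl)
  have lower_m : (m:ℝ) • modConv a n b (m - 1) ∈ Submodule.span ℝ (expMonomials N) := by
    rcases m with _ | m
    · simp
    · exact Submodule.smul_mem _ _ (ih (n + m) (by omega) hn (by omega) rfl)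
  exact add_mem (sub_mem (sub_mem (Submodule.smul_mem _ _ (expMonomial_mem_span a hn))
    (Submodule.smul_mem _ _ (expMonomial_mem_span b hm))) lower_n) lower_m

/-- The real linear span of `P_N` is closed under the modified finite convolution `*̃`
(extended canonically from the generators), i.e. `(⟨P_N⟩_ℝ, *̃)` is an algebra over `ℝ`,
for every `N`. -/
theorem span_expMonomials_closed_under_modConv (N : ℕ) :
    ∀ (a b : ℝ) (n m : ℕ), n < N → m < N →
      modConv a n b m ∈ Submodule.span ℝ (expMonomials N) := by
  intro a b n m hn hm
  rcases eq_or_ne a b with rfl | hab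
  · simp [modConv]
  · exact modConv_mem_span_expMonomials hab hn hm
end
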